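/- Let d ∈ ℕ, let L be a finite set of unary relation symbols, and let ψ(x,y) be a first-order formula with two free variables in the relational language consisting of one binary edge relation symbol together with the unary relation symbols of L. Then there exist ℓ, q ∈ ℕ, depending only on d and ψ, such that for every finite structure G in that language whose binary relation is the (symmetric, irreflexive) edge relation of a simple graph of maximum degree at most d, the interpreted graph I_ψ(G) — the simple graph on the universe of G with edges {u,v} for distinct u, v such that G ⊨ ψ(u,v) ∨ ψ(v,u) — is (ℓ,q)-near-covered. -/

import Mathlib

open FirstOrder

/-- Two vertices `u`, `v` of a simple graph `G` are *near-`k`-twins* if the symmetric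
difference of their open neighbourhoods has at most `k` elements. -/
def nearTwin {V : Type*} (G : SimpleGraph V) (k : ℕ) (u v : V) : Prop :=
  (symmDiff (G.neighborSet u) (G.neighborSet v)).ncard ≤ k

/-- A graph is `(k₀, p)`-near-uniform if for some `k ≤ k₀` the near-`k`-twin relation is
an equivalence relation with at most `p` equivalence classes. -/
def NearUniform {V : Type*} (G : SimpleGraph V) (k₀ p : ℕ) : Prop :=
  ∃ k ≤ k₀, Equivalence (nearTwin G k) ∧
    {C : Set V | ∃ u, C = {v | nearTwin G k u v}}.ncard ≤ p

/-- A graph is `(ℓ, q)`-near-covered if there is a set `S` of at most `q` vertices such that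
every vertex is a near-`ℓ`-twin of some element of `S`. -/
def NearCovered {V : Type*} (G : SimpleGraph V) (ℓ q : ℕ) : Prop :=
  ∃ S : Set V, S.ncard ≤ q ∧ ∀ v, ∃ s ∈ S, nearTwin G ℓ s v

/-- Relation symbols for the language of labelled graphs: the unary symbols are the
labels from `Λ` and there is a single binary (edge) relation symbol. -/
def labelRels (Λ : Type) : ℕ → Type
  | 1 => Λ
  | 2 => PUnit
  | _ => Empty

/-- The first-order relational language with one binary edge relation symbol and
unary relation symbols given by the label set `Λ`. -/
def labelledGraphLang (Λ : Type) : FirstOrder.Language :=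
  ⟨fun _ => Empty, labelRels Λ⟩

/-- The first-order structure on the vertex set of a simple graph `G` in which the binary
relation symbol is interpreted by adjacency in `G` and each unary label symbol `l` is
interpreted by the vertex set `lab l`. -/
def labelledStructure {Λ V : Type} (G : SimpleGraph V) (lab : Λ → Set V) :
    (labelledGraphLang Λ).Structure V where
  funMap {n} f _ := f.elim
  RelMap {n} :=
    match n with
    | 0 => fun r _ => r.elim
    | 1 => fun l x => x 0 ∈ lab l
    | 2 => fun _ x => G.Adj (x 0) (x 1)
    | (_ + 3) => fun r _ => r.elim

/-- The graph interpreted by the formula `ψ(x,y)` in the labelled graph `(G, lab)`: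
distinct vertices `u`, `v` are adjacent iff `ψ(u,v) ∨ ψ(v,u)` holds. -/
def interpGraph {Λ V : Type} (G : SimpleGraph V) (lab : Λ → Set V)
    (ψ : (labelledGraphLang Λ).Formula (Fin 2)) : SimpleGraph V where
  Adj u v := u ≠ v ∧
    (letI := labelledStructure G lab
     ψ.Realize ![u, v] ∨ ψ.Realize ![v, u])
  symm := by
    constructor
    intro u v h
    exact ⟨Ne.symm h.1, h.2.elim Or.inr Or.inl⟩
  loopless := by
    constructor
    intro u h
    exact h.1 rfl

/-!
Let `r` be the locality radius of `ψ`. If the labelled `r`-balls around `u` and `v` are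
isomorphic, then for every `w` farther than `2r + 1` from both, the `r`-neighbourhoods of `(u, w)`
and `(v, w)` are isomorphic, and a back-and-forth argument (Hanf locality) shows that `ψ` does not
distinguish the two pairs. So the neighbourhoods of `u` and `v` in `I_ψ(G)` differ only inside two
balls of radius `2r + 1`, which have at most `(d + 1) ^ (2r + 1)` vertices each. Since `r`-balls
have at most `(d + 1) ^ r` vertices, they fall into boundedly many isomorphism types, and one
vertex of each type gives the cover.
-/

namespace SimpleGraph

variable {V Λ : Type*} (G : SimpleGraph V)

def closedBall (c : V) (r : ℕ) : Set V := {v | G.edist v c ≤ r}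

def nbhd {ι : Type*} (t : ι → V) (r : ℕ) : Set V := ⋃ i, G.closedBall (t i) r

variable {G} {ι ι' : Type*} {c v w : V} {r s k d : ℕ}

@[simp] theorem mem_closedBall : v ∈ G.closedBall c r ↔ G.edist v c ≤ r := Iff.rfl

theorem mem_closedBall_self : c ∈ G.closedBall c r := by simp

theorem closedBall_zero : G.closedBall c 0 = {c} := by ext; simp

theorem closedBall_mono (h : r ≤ s) : G.closedBall c r ⊆ G.closedBall c s :=
  fun _ hv => (mem_closedBall.mp hv).trans (by exact_mod_cast h)

theorem mem_closedBall_comm : v ∈ G.closedBall c r ↔ c ∈ G.closedBall v r := by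
  simp [edist_comm]

theorem mem_closedBall_add (hv : v ∈ G.closedBall w s) (hw : w ∈ G.closedBall c r) :
    v ∈ G.closedBall c (s + r) := by
  rw [mem_closedBall, Nat.cast_add]
  exact G.edist_triangle.trans (add_le_add hv hw)

theorem mem_closedBall_succ_of_adj (hv : v ∈ G.closedBall c r) (h : G.Adj v w) :
    w ∈ G.closedBall c (r + 1) := by
  rw [add_comm]
  refine mem_closedBall_add ?_ hv
  simpa using edist_le_one_iff_adj_or_eq.2 (Or.inl h.symm)

theorem closedBall_succ_subset :
    G.closedBall c (r + 1) ⊆ ⋃ x ∈ G.closedBall c r, insert x (G.neighborSet x) := by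
  intro v hv
  obtain ⟨p, hp⟩ := exists_walk_of_edist_ne_top (ne_top_of_le_ne_top (by simp) hv)
  have hlen : p.length ≤ r + 1 := by rw [mem_closedBall, ← hp] at hv; exact_mod_cast hv
  cases p with
  | nil => exact Set.mem_biUnion mem_closedBall_self (Set.mem_insert _ _)
  | cons h q =>
    rw [Walk.length_cons] at hlen
    refine Set.mem_biUnion ((edist_le q).trans ?_) (Set.mem_insert_of_mem _ h.symm)
    exact_mod_cast Nat.le_of_succ_le_succ hlen

theorem ncard_closedBall_le [Finite V] (hdeg : ∀ v : V, (G.neighborSet v).ncard ≤ d)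
    (c : V) (r : ℕ) : (G.closedBall c r).ncard ≤ (d + 1) ^ r := by
  induction r with
  | zero => simp [closedBall_zero]
  | succ r ih =>
    set B := (G.closedBall c r).toFinite.toFinset
    have hB : ⋃ x ∈ G.closedBall c r, insert x (G.neighborSet x) =
        ⋃ x ∈ B, insert x (G.neighborSet x) := by simp [B]
    calc (G.closedBall c (r + 1)).ncard
        ≤ (⋃ x ∈ B, insert x (G.neighborSet x)).ncard :=
          Set.ncard_le_ncard (hB ▸ closedBall_succ_subset)
      _ ≤ ∑ x ∈ B, (insert x (G.neighborSet x)).ncard := Finset.set_ncard_biUnion_le _ _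
      _ ≤ B.card * (d + 1) := by
          refine (Finset.sum_le_card_nsmul _ _ (d + 1) fun x _ => ?_).trans_eq (smul_eq_mul _ _)
          exact (Set.ncard_insert_le _ _).trans (by have := hdeg x; omega)
      _ ≤ (d + 1) ^ (r + 1) := by
          rw [pow_succ, ← Set.ncard_eq_toFinset_card]
          exact Nat.mul_le_mul_right _ ih

theorem closedBall_subset_nbhd (t : ι → V) (i : ι) : G.closedBall (t i) r ⊆ G.nbhd t r :=
  Set.subset_iUnion (fun i => G.closedBall (t i) r) i

theorem nbhd_mono {t : ι → V} (h : r ≤ s) : G.nbhd t r ⊆ G.nbhd t s :=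
  Set.iUnion_mono fun _ => closedBall_mono h

theorem mem_nbhd_self (t : ι → V) (i : ι) : t i ∈ G.nbhd t r :=
  closedBall_subset_nbhd t i mem_closedBall_self

theorem nbhd_unit : G.nbhd (fun _ : Unit => c) r = G.closedBall c r := by
  simp only [nbhd, Set.iUnion_const]

theorem nbhd_subset_of_forall_mem {t : ι → V} {u : ι' → V}
    (hu : ∀ j, ∃ i, u j ∈ G.closedBall (t i) k) (h : s + k ≤ r) : G.nbhd u s ⊆ G.nbhd t r := by
  simp only [nbhd, Set.iUnion_subset_iff]
  intro j x hx
  obtain ⟨i, hi⟩ := hu j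
  exact closedBall_subset_nbhd t i (closedBall_mono h (mem_closedBall_add hx hi))

theorem mapsTo_closedBall_of_map_adj {f : V → V} {c' : V} (hc : f c = c')
    (hf : ∀ x ∈ G.closedBall c r, ∀ y ∈ G.closedBall c r, G.Adj x y → G.Adj (f x) (f y))
    (hs : s ≤ r) : Set.MapsTo f (G.closedBall c s) (G.closedBall c' s) := by
  induction s with
  | zero => simp [closedBall_zero, hc, Set.mapsTo_singleton]
  | succ s ih =>
    intro x hx
    obtain ⟨y, hy, rfl | hxy⟩ := Set.mem_iUnion₂.mp (closedBall_succ_subset hx)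
    · exact closedBall_mono (by omega) (ih (by omega) hy)
    · refine mem_closedBall_succ_of_adj (ih (by omega) hy) (hf y ?_ x ?_ hxy)
      · exact closedBall_mono (by omega) hy
      · exact closedBall_mono hs hx

variable (G) in
/-- An isomorphism between the labelled graphs induced on the `r`-neighbourhoods of the tuples
`t` and `t'`, sending `t i` to `t' i`. The maps are total; only their values on the
neighbourhoods matter. -/
structure LocalIso (lab : Λ → Set V) (r : ℕ) (t t' : ι → V) where
  toFun : V → V
  invFun : V → V
  map_tuple : ∀ i, toFun (t i) = t' i
  left_inv : Set.LeftInvOn invFun toFun (G.nbhd t r)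
  right_inv : Set.RightInvOn invFun toFun (G.nbhd t' r)
  map_adj : ∀ x ∈ G.nbhd t r, ∀ y ∈ G.nbhd t r, G.Adj x y → G.Adj (toFun x) (toFun y)
  invFun_adj : ∀ x ∈ G.nbhd t' r, ∀ y ∈ G.nbhd t' r, G.Adj x y → G.Adj (invFun x) (invFun y)
  mem_lab_iff : ∀ x ∈ G.nbhd t r, ∀ l, x ∈ lab l ↔ toFun x ∈ lab l

namespace LocalIso

variable {lab : Λ → Set V} {t t' t'' : ι → V}

theorem invFun_tuple (S : G.LocalIso lab r t t') (i : ι) : S.invFun (t' i) = t i := by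
  rw [← S.map_tuple i, S.left_inv (mem_nbhd_self t i)]

theorem mapsTo_closedBall (S : G.LocalIso lab r t t') (i : ι) (hs : s ≤ r) :
    Set.MapsTo S.toFun (G.closedBall (t i) s) (G.closedBall (t' i) s) :=
  mapsTo_closedBall_of_map_adj (S.map_tuple i) (fun x hx y hy =>
    S.map_adj x (closedBall_subset_nbhd t i hx) y (closedBall_subset_nbhd t i hy)) hs

theorem invFun_mapsTo_closedBall (S : G.LocalIso lab r t t') (i : ι) (hs : s ≤ r) :
    Set.MapsTo S.invFun (G.closedBall (t' i) s) (G.closedBall (t i) s) :=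
  mapsTo_closedBall_of_map_adj (S.invFun_tuple i) (fun x hx y hy =>
    S.invFun_adj x (closedBall_subset_nbhd t' i hx) y (closedBall_subset_nbhd t' i hy)) hs

theorem mapsTo_nbhd (S : G.LocalIso lab r t t') (hs : s ≤ r) :
    Set.MapsTo S.toFun (G.nbhd t s) (G.nbhd t' s) := by
  simp only [nbhd, Set.mapsTo_iUnion]
  exact fun i => (S.mapsTo_closedBall i hs).mono_right (closedBall_subset_nbhd t' i)

theorem invFun_mapsTo_nbhd (S : G.LocalIso lab r t t') (hs : s ≤ r) :
    Set.MapsTo S.invFun (G.nbhd t' s) (G.nbhd t s) := by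
  simp only [nbhd, Set.mapsTo_iUnion]
  exact fun i => (S.invFun_mapsTo_closedBall i hs).mono_right (closedBall_subset_nbhd t i)

def symm (S : G.LocalIso lab r t t') : G.LocalIso lab r t' t where
  toFun := S.invFun
  invFun := S.toFun
  map_tuple := S.invFun_tuple
  left_inv := S.right_inv
  right_inv := S.left_inv
  map_adj := S.invFun_adj
  invFun_adj := S.map_adj
  mem_lab_iff x hx l := by
    rw [S.mem_lab_iff _ (S.invFun_mapsTo_nbhd le_rfl hx), S.right_inv hx]

def refl (G : SimpleGraph V) (lab : Λ → Set V) (r : ℕ) (t : ι → V) : G.LocalIso lab r t t where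
  toFun := id
  invFun := id
  map_tuple _ := rfl
  left_inv _ _ := rfl
  right_inv _ _ := rfl
  map_adj _ _ _ _ h := h
  invFun_adj _ _ _ _ h := h
  mem_lab_iff _ _ _ := Iff.rfl

def trans (S : G.LocalIso lab r t t') (T : G.LocalIso lab r t' t'') :
    G.LocalIso lab r t t'' where
  toFun := T.toFun ∘ S.toFun
  invFun := S.invFun ∘ T.invFun
  map_tuple i := by simp [S.map_tuple, T.map_tuple]
  left_inv := S.left_inv.comp T.left_inv (S.mapsTo_nbhd le_rfl)
  right_inv := S.right_inv.comp T.right_inv (T.invFun_mapsTo_nbhd le_rfl)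
  map_adj x hx y hy h := T.map_adj _ (S.mapsTo_nbhd le_rfl hx) _ (S.mapsTo_nbhd le_rfl hy)
    (S.map_adj x hx y hy h)
  invFun_adj x hx y hy h := S.invFun_adj _ (T.invFun_mapsTo_nbhd le_rfl hx) _
    (T.invFun_mapsTo_nbhd le_rfl hy) (T.invFun_adj x hx y hy h)
  mem_lab_iff x hx l := (S.mem_lab_iff x hx l).trans
    (T.mem_lab_iff _ (S.mapsTo_nbhd le_rfl hx) l)

def restrict (S : G.LocalIso lab r t t') (u u' : ι' → V)
    (hu : ∀ j, ∃ i, u j ∈ G.closedBall (t i) k) (hu' : ∀ j, S.toFun (u j) = u' j)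
    (h : s + k ≤ r) : G.LocalIso lab s u u' :=
  have hsub : G.nbhd u s ⊆ G.nbhd t r := nbhd_subset_of_forall_mem hu h
  have hsub' : G.nbhd u' s ⊆ G.nbhd t' r := nbhd_subset_of_forall_mem (fun j => by
    obtain ⟨i, hi⟩ := hu j
    exact ⟨i, hu' j ▸ S.mapsTo_closedBall i (by omega) hi⟩) h
  { toFun := S.toFun
    invFun := S.invFun
    map_tuple := hu'
    left_inv := S.left_inv.mono hsub
    right_inv := S.right_inv.mono hsub'
    map_adj := fun x hx y hy => S.map_adj x (hsub hx) y (hsub hy)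
    invFun_adj := fun x hx y hy => S.invFun_adj x (hsub' hx) y (hsub' hy)
    mem_lab_iff := fun x hx => S.mem_lab_iff x (hsub hx) }

def mono (S : G.LocalIso lab r t t') (h : s ≤ r) : G.LocalIso lab s t t' :=
  S.restrict t t' (k := 0) (fun i => ⟨i, mem_closedBall_self⟩) S.map_tuple h

def reindex (S : G.LocalIso lab r t t') (σ : ι' → ι) {u u' : ι' → V}
    (hu : ∀ j, t (σ j) = u j) (hu' : ∀ j, t' (σ j) = u' j) : G.LocalIso lab r u u' :=
  S.restrict u u' (k := 0) (fun j => ⟨σ j, hu j ▸ mem_closedBall_self⟩)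
    (fun j => by rw [← hu j, S.map_tuple, hu']) le_rfl

def snoc {α : Type*} {n : ℕ} {v v' : α → V} {xs xs' : Fin n → V} {c c' : V}
    (S : G.LocalIso lab r (Sum.elim (Sum.elim v xs) fun _ : Unit => c)
      (Sum.elim (Sum.elim v' xs') fun _ : Unit => c')) :
    G.LocalIso lab r (Sum.elim v (Fin.snoc xs c)) (Sum.elim v' (Fin.snoc xs' c')) :=
  S.reindex (Sum.elim (Sum.inl ∘ Sum.inl) (Fin.lastCases (Sum.inr ()) (Sum.inl ∘ Sum.inr)))
    (by rintro (a | k) <;> [rfl; exact Fin.lastCases (by simp) (by simp) k])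
    (by rintro (a | k) <;> [rfl; exact Fin.lastCases (by simp) (by simp) k])

end LocalIso

variable {lab : Λ → Set V} {t₁ t₁' : ι → V} {t₂ t₂' : ι' → V} {x y : V}

theorem nbhd_sumElim : G.nbhd (Sum.elim t₁ t₂) r = G.nbhd t₁ r ∪ G.nbhd t₂ r := by
  simp [nbhd, Set.iUnion_sum]

theorem notMem_nbhd_of_far (hd : ∀ j, t₂ j ∉ G.nbhd t₁ (2 * r + 1))
    (hx : x ∈ G.nbhd t₁ r) : x ∉ G.nbhd t₂ r := by
  simp only [nbhd, Set.mem_iUnion] at hx ⊢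
  rintro ⟨j, hj⟩
  obtain ⟨i, hi⟩ := hx
  exact hd j (closedBall_subset_nbhd t₁ i
    (closedBall_mono (by omega) (mem_closedBall_add (mem_closedBall_comm.mp hj) hi)))

theorem not_adj_of_far (hd : ∀ j, t₂ j ∉ G.nbhd t₁ (2 * r + 1))
    (hx : x ∈ G.nbhd t₁ r) (hy : y ∈ G.nbhd t₂ r) : ¬ G.Adj x y := by
  simp only [nbhd, Set.mem_iUnion] at hx hy
  intro h
  obtain ⟨i, hi⟩ := hx
  obtain ⟨j, hj⟩ := hy
  exact hd j (closedBall_subset_nbhd t₁ i (closedBall_mono (by omega)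
    (mem_closedBall_add (mem_closedBall_comm.mp hj) (mem_closedBall_succ_of_adj hi h))))

namespace LocalIso

open scoped Classical in
/-- Tuples more than `2r + 1` apart have disjoint `r`-neighbourhoods with no edge between
them, so local isomorphisms of them glue. -/
noncomputable def union (S₁ : G.LocalIso lab r t₁ t₁') (S₂ : G.LocalIso lab r t₂ t₂')
    (hd : ∀ j, t₂ j ∉ G.nbhd t₁ (2 * r + 1)) (hd' : ∀ j, t₂' j ∉ G.nbhd t₁' (2 * r + 1)) :
    G.LocalIso lab r (Sum.elim t₁ t₂) (Sum.elim t₁' t₂') :=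
  have hF₁ : Set.EqOn ((G.nbhd t₂ r).piecewise S₂.toFun S₁.toFun) S₁.toFun (G.nbhd t₁ r) :=
    fun _ hx => Set.piecewise_eq_of_notMem _ _ _ (notMem_nbhd_of_far hd hx)
  have hF₂ : Set.EqOn ((G.nbhd t₂ r).piecewise S₂.toFun S₁.toFun) S₂.toFun (G.nbhd t₂ r) :=
    fun _ hx => Set.piecewise_eq_of_mem _ _ _ hx
  have hG₁ : Set.EqOn ((G.nbhd t₂' r).piecewise S₂.invFun S₁.invFun) S₁.invFun (G.nbhd t₁' r) :=
    fun _ hx => Set.piecewise_eq_of_notMem _ _ _ (notMem_nbhd_of_far hd' hx)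
  have hG₂ : Set.EqOn ((G.nbhd t₂' r).piecewise S₂.invFun S₁.invFun) S₂.invFun (G.nbhd t₂' r) :=
    fun _ hx => Set.piecewise_eq_of_mem _ _ _ hx
  { toFun := (G.nbhd t₂ r).piecewise S₂.toFun S₁.toFun
    invFun := (G.nbhd t₂' r).piecewise S₂.invFun S₁.invFun
    map_tuple := by
      rintro (i | j)
      · exact (hF₁ (mem_nbhd_self t₁ i)).trans (S₁.map_tuple i)
      · exact (hF₂ (mem_nbhd_self t₂ j)).trans (S₂.map_tuple j)
    left_inv := by
      rw [nbhd_sumElim]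
      rintro x (hx | hx)
      · rw [hF₁ hx, hG₁ (S₁.mapsTo_nbhd le_rfl hx), S₁.left_inv hx]
      · rw [hF₂ hx, hG₂ (S₂.mapsTo_nbhd le_rfl hx), S₂.left_inv hx]
    right_inv := by
      rw [nbhd_sumElim]
      rintro y (hy | hy)
      · rw [hG₁ hy, hF₁ (S₁.invFun_mapsTo_nbhd le_rfl hy), S₁.right_inv hy]
      · rw [hG₂ hy, hF₂ (S₂.invFun_mapsTo_nbhd le_rfl hy), S₂.right_inv hy]
    map_adj := by
      rw [nbhd_sumElim]
      rintro x (hx | hx) y (hy | hy) h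
      · rw [hF₁ hx, hF₁ hy]; exact S₁.map_adj x hx y hy h
      · exact absurd h (not_adj_of_far hd hx hy)
      · exact absurd h.symm (not_adj_of_far hd hy hx)
      · rw [hF₂ hx, hF₂ hy]; exact S₂.map_adj x hx y hy h
    invFun_adj := by
      rw [nbhd_sumElim]
      rintro x (hx | hx) y (hy | hy) h
      · rw [hG₁ hx, hG₁ hy]; exact S₁.invFun_adj x hx y hy h
      · exact absurd h (not_adj_of_far hd' hx hy)
      · exact absurd h.symm (not_adj_of_far hd' hy hx)
      · rw [hG₂ hx, hG₂ hy]; exact S₂.invFun_adj x hx y hy h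
    mem_lab_iff := by
      rw [nbhd_sumElim]
      rintro x (hx | hx)
      · rw [hF₁ hx]; exact S₁.mem_lab_iff x hx
      · rw [hF₂ hx]; exact S₂.mem_lab_iff x hx }

variable {t t' : ι → V} {e : ℕ}

/-- Counting argument: `S` matches the points of each `e`-type near `t` bijectively with
those near `t'`, so both tuples have equally many points of that type far away. -/
theorem exists_far (S : G.LocalIso lab (3 * e + 1) t t') [Finite V]
    (hc : c ∉ G.nbhd t (2 * e + 1)) :
    ∃ c', c' ∉ G.nbhd t' (2 * e + 1) ∧
      Nonempty (G.LocalIso lab e (fun _ : Unit => c) (fun _ : Unit => c')) := by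
  set E := {x | Nonempty (G.LocalIso lab e (fun _ : Unit => c) (fun _ : Unit => x))}
  have hE : ∀ {t t' : ι → V} (S : G.LocalIso lab (3 * e + 1) t t'),
      Set.MapsTo S.toFun (E ∩ G.nbhd t (2 * e + 1)) (E ∩ G.nbhd t' (2 * e + 1)) := by
    rintro t t' S x ⟨⟨Sx⟩, hx⟩
    obtain ⟨i, hi⟩ := Set.mem_iUnion.mp hx
    refine ⟨⟨Sx.trans (S.restrict (fun _ => x) _ (fun _ => ⟨i, hi⟩) (fun _ => rfl) ?_)⟩,
      S.mapsTo_nbhd (by omega) hx⟩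
    omega
  have hbij : Set.BijOn S.toFun (E ∩ G.nbhd t (2 * e + 1)) (E ∩ G.nbhd t' (2 * e + 1)) :=
    Set.InvOn.bijOn ⟨S.left_inv.mono (Set.inter_subset_right.trans (nbhd_mono (by omega))),
      S.right_inv.mono (Set.inter_subset_right.trans (nbhd_mono (by omega)))⟩ (hE S) (hE S.symm)
  have hfar : (E \ G.nbhd t (2 * e + 1)).ncard = (E \ G.nbhd t' (2 * e + 1)).ncard := by
    have := Set.ncard_inter_add_ncard_sdiff_eq_ncard E (G.nbhd t (2 * e + 1))
    have := Set.ncard_inter_add_ncard_sdiff_eq_ncard E (G.nbhd t' (2 * e + 1))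
    have := hbij.ncard_eq
    omega
  have hcE : c ∈ E \ G.nbhd t (2 * e + 1) := ⟨⟨refl G lab e _⟩, hc⟩
  obtain ⟨c', hc'E, hc'⟩ : (E \ G.nbhd t' (2 * e + 1)).Nonempty :=
    Set.nonempty_of_ncard_ne_zero (hfar ▸ ((Set.ncard_pos).mpr ⟨c, hcE⟩).ne')
  exact ⟨c', hc', hc'E⟩

/-- Back-and-forth step: a new point within `2e + 1` of `t` is sent along `S`, a farther one
is matched by counting (`exists_far`). -/
theorem exists_extend (S : G.LocalIso lab (3 * e + 1) t t') [Finite V] (c : V) :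
    ∃ c', Nonempty (G.LocalIso lab e (Sum.elim t fun _ : Unit => c)
      (Sum.elim t' fun _ : Unit => c')) := by
  by_cases hc : c ∈ G.nbhd t (2 * e + 1)
  · obtain ⟨i, hi⟩ := Set.mem_iUnion.mp hc
    refine ⟨S.toFun c, ⟨S.restrict _ _ (k := 2 * e + 1) ?_ ?_ (by omega)⟩⟩
    · rintro (j | _)
      exacts [⟨j, mem_closedBall_self⟩, ⟨i, hi⟩]
    · rintro (j | _)
      exacts [S.map_tuple j, rfl]
  · obtain ⟨c', hc', ⟨Sc⟩⟩ := S.exists_far hc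
    exact ⟨c', ⟨(S.mono (by omega)).union Sc (fun _ => hc) (fun _ => hc')⟩⟩

end LocalIso

end SimpleGraph

namespace FirstOrder.Language.BoundedFormula

variable {L : Language} {α : Type*}

/-- Truth of a formula at a tuple only depends on the labelled neighbourhood of this radius
(`LocalIso.realize_iff`); the recursion `3e + 1` at a quantifier is what
`LocalIso.exists_extend` needs. -/
def localityRadius : ∀ {n : ℕ}, L.BoundedFormula α n → ℕ
  | _, falsum => 0
  | _, equal _ _ => 0
  | _, rel _ _ => 0
  | _, imp φ ψ => max φ.localityRadius ψ.localityRadius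
  | _, all φ => 3 * φ.localityRadius + 1

end FirstOrder.Language.BoundedFormula

open FirstOrder.Language

theorem labelledGraphLang.exists_term_eq_var {Λ : Type} {β : Type*}
    (t : (labelledGraphLang Λ).Term β) : ∃ i, t = Term.var i := by
  cases t with
  | var i => exact ⟨i, rfl⟩
  | func f _ => exact f.elim

namespace SimpleGraph.LocalIso

variable {Λ V : Type} [Finite V] {G : SimpleGraph V} {lab : Λ → Set V} {r : ℕ} {α : Type}

theorem realize_iff {n : ℕ} (φ : (labelledGraphLang Λ).BoundedFormula α n) {v v' : α → V}
    {xs xs' : Fin n → V} (S : G.LocalIso lab r (Sum.elim v xs) (Sum.elim v' xs'))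
    (hr : φ.localityRadius ≤ r) :
    (letI := labelledStructure G lab; φ.Realize v xs ↔ φ.Realize v' xs') := by
  let := labelledStructure G lab
  induction φ generalizing r with
  | falsum => exact Iff.rfl
  | equal t₁ t₂ =>
    obtain ⟨i₁, rfl⟩ := labelledGraphLang.exists_term_eq_var t₁
    obtain ⟨i₂, rfl⟩ := labelledGraphLang.exists_term_eq_var t₂
    show Sum.elim v xs i₁ = Sum.elim v xs i₂ ↔ Sum.elim v' xs' i₁ = Sum.elim v' xs' i₂
    rw [← S.map_tuple i₁, ← S.map_tuple i₂]
    exact ⟨congrArg S.toFun, S.left_inv.injOn (mem_nbhd_self _ i₁) (mem_nbhd_self _ i₂)⟩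
  | @rel n k R ts =>
    match k, R with
    | 1, l =>
      obtain ⟨i, hi⟩ := labelledGraphLang.exists_term_eq_var (ts 0)
      show (ts 0).realize (Sum.elim v xs) ∈ lab l ↔ (ts 0).realize (Sum.elim v' xs') ∈ lab l
      rw [hi]
      show Sum.elim v xs i ∈ lab l ↔ Sum.elim v' xs' i ∈ lab l
      rw [← S.map_tuple i]
      exact S.mem_lab_iff _ (mem_nbhd_self _ i) l
    | 2, _ =>
      obtain ⟨i, hi⟩ := labelledGraphLang.exists_term_eq_var (ts 0)
      obtain ⟨j, hj⟩ := labelledGraphLang.exists_term_eq_var (ts 1)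
      show G.Adj ((ts 0).realize (Sum.elim v xs)) ((ts 1).realize (Sum.elim v xs)) ↔
        G.Adj ((ts 0).realize (Sum.elim v' xs')) ((ts 1).realize (Sum.elim v' xs'))
      rw [hi, hj]
      show G.Adj (Sum.elim v xs i) (Sum.elim v xs j) ↔
        G.Adj (Sum.elim v' xs' i) (Sum.elim v' xs' j)
      refine ⟨fun h => ?_, fun h => ?_⟩
      · rw [← S.map_tuple i, ← S.map_tuple j]
        exact S.map_adj _ (mem_nbhd_self _ i) _ (mem_nbhd_self _ j) h
      · rw [← S.invFun_tuple i, ← S.invFun_tuple j]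
        exact S.invFun_adj _ (mem_nbhd_self _ i) _ (mem_nbhd_self _ j) h
  | imp φ ψ ihφ ihψ =>
    simp only [BoundedFormula.localityRadius, max_le_iff] at hr
    simp only [BoundedFormula.realize_imp, ihφ S hr.1, ihψ S hr.2]
  | all φ ih =>
    simp only [BoundedFormula.localityRadius] at hr
    have S' := S.mono hr
    simp only [BoundedFormula.realize_all]
    refine ⟨fun H c' => ?_, fun H c => ?_⟩
    · obtain ⟨c, ⟨Sc⟩⟩ := S'.symm.exists_extend c'
      exact (ih Sc.symm.snoc le_rfl).mp (H c)
    · obtain ⟨c', ⟨Sc⟩⟩ := S'.exists_extend c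
      exact (ih Sc.snoc le_rfl).mpr (H c')

theorem realize_formula_iff (φ : (labelledGraphLang Λ).Formula α) {v v' : α → V}
    (S : G.LocalIso lab r v v') (hr : φ.localityRadius ≤ r) :
    (letI := labelledStructure G lab; φ.Realize v ↔ φ.Realize v') :=
  realize_iff φ (S.reindex (Sum.elim id Fin.elim0) (by rintro (a | k) <;> [rfl; exact k.elim0])
    (by rintro (a | k) <;> [rfl; exact k.elim0])) hr

end SimpleGraph.LocalIso

namespace SimpleGraph

variable {Λ V : Type} [Finite V] {G : SimpleGraph V} {lab : Λ → Set V} {u v w : V}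

theorem interpGraph_adj_iff_of_far (ψ : (labelledGraphLang Λ).Formula (Fin 2))
    (S : G.LocalIso lab ψ.localityRadius (fun _ : Unit => u) (fun _ : Unit => v))
    (hu : w ∉ G.closedBall u (2 * ψ.localityRadius + 1))
    (hv : w ∉ G.closedBall v (2 * ψ.localityRadius + 1)) :
    (interpGraph G lab ψ).Adj u w ↔ (interpGraph G lab ψ).Adj v w := by
  have P := S.union (LocalIso.refl G lab _ fun _ : Unit => w)
    (fun _ => nbhd_unit ▸ hu) (fun _ => nbhd_unit ▸ hv)
  have h₁ := (P.reindex ![.inl (), .inr ()] (u := ![u, w]) (u' := ![v, w])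
    (by simp [Fin.forall_fin_two]) (by simp [Fin.forall_fin_two])).realize_formula_iff ψ le_rfl
  have h₂ := (P.reindex ![.inr (), .inl ()] (u := ![w, u]) (u' := ![w, v])
    (by simp [Fin.forall_fin_two]) (by simp [Fin.forall_fin_two])).realize_formula_iff ψ le_rfl
  have hne : ∀ {x}, w ∉ G.closedBall x (2 * ψ.localityRadius + 1) → x ≠ w :=
    fun h hx => h (hx ▸ mem_closedBall_self)
  exact and_congr (iff_of_true (hne hu) (hne hv)) (or_congr h₁ h₂)

theorem nearTwin_interpGraph {d : ℕ} (hdeg : ∀ x : V, (G.neighborSet x).ncard ≤ d)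
    (ψ : (labelledGraphLang Λ).Formula (Fin 2))
    (S : G.LocalIso lab ψ.localityRadius (fun _ : Unit => u) (fun _ : Unit => v)) :
    nearTwin (interpGraph G lab ψ) (2 * (d + 1) ^ (2 * ψ.localityRadius + 1)) u v := by
  set R := 2 * ψ.localityRadius + 1
  have hsub : symmDiff ((interpGraph G lab ψ).neighborSet u)
      ((interpGraph G lab ψ).neighborSet v) ⊆ G.closedBall u R ∪ G.closedBall v R := by
    intro w hw
    by_contra hfar
    rw [Set.mem_union, not_or] at hfar
    have := interpGraph_adj_iff_of_far ψ S hfar.1 hfar.2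
    rw [Set.mem_symmDiff] at hw
    exact hw.elim (fun h => h.2 (this.mp h.1)) (fun h => h.2 (this.mpr h.1))
  calc _ ≤ (G.closedBall u R ∪ G.closedBall v R).ncard := Set.ncard_le_ncard hsub
    _ ≤ (G.closedBall u R).ncard + (G.closedBall v R).ncard := Set.ncard_union_le _ _
    _ ≤ 2 * (d + 1) ^ R := by
      have := ncard_closedBall_le hdeg u R
      have := ncard_closedBall_le hdeg v R
      omega

end SimpleGraph

theorem Set.Finite.exists_subset_range_fin {V : Type*} {s : Set V} (hs : s.Finite) {n : ℕ}
    (hn : s.ncard ≤ n) (a : V) : ∃ e : Fin n → V, s ⊆ Set.range e := by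
  have hl : hs.toFinset.toList.length = s.ncard := by
    rw [Finset.length_toList, Set.ncard_eq_toFinset_card s hs]
  refine ⟨fun i => hs.toFinset.toList.getD i a, fun x hx => ?_⟩
  obtain ⟨i, hi, rfl⟩ := List.getElem_of_mem (Finset.mem_toList.mpr (hs.mem_toFinset.mpr hx))
  exact ⟨⟨i, by omega⟩, List.getD_eq_getElem _ _ hi⟩

theorem nearCovered_of_forall_eq {V T : Type*} [Finite T] {H : SimpleGraph V} {ℓ : ℕ}
    (f : V → T) (hf : ∀ u v, f u = f v → nearTwin H ℓ u v) : NearCovered H ℓ (Nat.card T) := by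
  refine ⟨Set.range fun t : Set.range f => t.2.choose, ?_, fun v => ?_⟩
  · rw [← Nat.card_coe_set_eq]
    exact (Finite.card_range_le _).trans (Finite.card_subtype_le _)
  · have hv : f v ∈ Set.range f := ⟨v, rfl⟩
    exact ⟨_, ⟨⟨f v, hv⟩, rfl⟩, hf _ _ hv.choose_spec⟩

/-- What `SimpleGraph.pattern` records about an enumeration `ι → V` of a ball, repetitions
allowed: coincidence of indices, adjacency, labels and the centre. -/
abbrev BallPattern (Λ ι : Type*) : Type _ :=
  (ι → ι → Prop) × (ι → ι → Prop) × (ι → Λ → Prop) × (ι → Prop)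

namespace SimpleGraph

variable {Λ V ι : Type*} (G : SimpleGraph V) (lab : Λ → Set V)

def pattern (c : V) (e : ι → V) : BallPattern Λ ι :=
  (fun i j => e i = e j, fun i j => G.Adj (e i) (e j), fun i l => e i ∈ lab l, fun i => e i = c)

variable {G lab} [Nonempty ι] {c c' x y : V} {e e' : ι → V}

theorem leftInvOn_of_pattern_eq (h : G.pattern lab c e = G.pattern lab c' e') :
    Set.LeftInvOn (e ∘ Function.invFun e') (e' ∘ Function.invFun e) (Set.range e) := by
  rintro _ ⟨i, rfl⟩
  have hi : e (Function.invFun e (e i)) = e i := Function.invFun_eq ⟨i, rfl⟩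
  have hj : e' (Function.invFun e' (e' (Function.invFun e (e i)))) =
      e' (Function.invFun e (e i)) := Function.invFun_eq ⟨_, rfl⟩
  simp only [pattern, Prod.mk.injEq] at h
  exact ((congrFun₂ h.1 _ _).mpr hj).trans hi

theorem adj_of_pattern_eq (h : G.pattern lab c e = G.pattern lab c' e') (hx : x ∈ Set.range e)
    (hy : y ∈ Set.range e) (hxy : G.Adj x y) :
    G.Adj (e' (Function.invFun e x)) (e' (Function.invFun e y)) := by
  simp only [pattern, Prod.mk.injEq] at h
  rw [← Function.invFun_eq hx, ← Function.invFun_eq hy] at hxy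
  exact (congrFun₂ h.2.1 _ _).mp hxy

theorem mem_lab_iff_of_pattern_eq (h : G.pattern lab c e = G.pattern lab c' e')
    (hx : x ∈ Set.range e) (l : Λ) : x ∈ lab l ↔ e' (Function.invFun e x) ∈ lab l := by
  simp only [pattern, Prod.mk.injEq] at h
  conv_lhs => rw [← Function.invFun_eq hx]
  exact Iff.of_eq (congrFun₂ h.2.2.1 _ l)

theorem map_center_of_pattern_eq (h : G.pattern lab c e = G.pattern lab c' e')
    (hc : c ∈ Set.range e) : e' (Function.invFun e c) = c' := by
  simp only [pattern, Prod.mk.injEq] at h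
  exact (congrFun h.2.2.2 _).mp (Function.invFun_eq hc)

variable {r : ℕ}

noncomputable def LocalIso.ofPattern (he : G.closedBall c r ⊆ Set.range e)
    (he' : G.closedBall c' r ⊆ Set.range e') (h : G.pattern lab c e = G.pattern lab c' e') :
    G.LocalIso lab r (fun _ : Unit => c) (fun _ : Unit => c') where
  toFun := e' ∘ Function.invFun e
  invFun := e ∘ Function.invFun e'
  map_tuple _ := map_center_of_pattern_eq h (he mem_closedBall_self)
  left_inv := (leftInvOn_of_pattern_eq h).mono (nbhd_unit.trans_subset he)
  right_inv := (leftInvOn_of_pattern_eq h.symm).mono (nbhd_unit.trans_subset he')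
  map_adj _ hx _ hy := adj_of_pattern_eq h (he (nbhd_unit ▸ hx)) (he (nbhd_unit ▸ hy))
  invFun_adj _ hx _ hy := adj_of_pattern_eq h.symm (he' (nbhd_unit ▸ hx)) (he' (nbhd_unit ▸ hy))
  mem_lab_iff _ hx := mem_lab_iff_of_pattern_eq h (he (nbhd_unit ▸ hx))

end SimpleGraph

theorem stmt13 (d : ℕ) (Λ : Type) [Finite Λ]
    (ψ : (labelledGraphLang Λ).Formula (Fin 2)) :
    ∃ ℓ q : ℕ, ∀ (V : Type) [Fintype V] (G : SimpleGraph V) (lab : Λ → Set V),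
      (∀ v : V, (G.neighborSet v).ncard ≤ d) →
      NearCovered (interpGraph G lab ψ) ℓ q := by
  refine ⟨2 * (d + 1) ^ (2 * ψ.localityRadius + 1),
    Nat.card (BallPattern Λ (Fin ((d + 1) ^ ψ.localityRadius))), fun V _ G lab hdeg => ?_⟩
  have : Nonempty (Fin ((d + 1) ^ ψ.localityRadius)) := ⟨⟨0, by positivity⟩⟩
  choose e he using fun v : V => (G.closedBall v ψ.localityRadius).toFinite.exists_subset_range_fin
    (SimpleGraph.ncard_closedBall_le hdeg v _) v
  exact nearCovered_of_forall_eq (fun v => G.pattern lab v (e v))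
    fun u v h => SimpleGraph.nearTwin_interpGraph hdeg ψ (.ofPattern (he u) (he v) h)
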